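/- arXiv:1708.09272 — 4 statements merged into one kernel-verified Lean document; each statement's English description precedes it below -/
import Mathlib

section
/- Let ρ_1,…,ρ_K ∈ (0,1) with ρ_* = max_k ρ_k, let c_1,…,c_K ∈ ℝ with ∑_{k:ρ_k=ρ_*} c_k ≠ 0, and let a_1,…,a_K ∈ ℝ satisfy a_k = a whenever ρ_k = ρ_*. Then (∑_{k=1}^K c_k a_k (1-ρ_k)^{-1} ρ_k^n)/(∑_{k=1}^K c_k ρ_k^n) converges to a(1-ρ_*)^{-1} as n → ∞. -/
/-!
Divide numerator and denominator by `ρ_*ⁿ`: every term with `ρ_k < ρ_*` decays geometrically,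
so both sums tend to their restrictions to the indices with `ρ_k = ρ_*`. On those indices
`a_k (1 - ρ_k)⁻¹ = a (1 - ρ_*)⁻¹` is constant, and the common factor `∑ c_k ≠ 0` cancels.
-/

open Filter Finset Topology

theorem tendsto_sum_mul_div_pow {ι : Type*} [Fintype ι] (ρ d : ι → ℝ) {r : ℝ} (hr : 0 < r)
    (h0 : ∀ k, 0 ≤ ρ k) (hle : ∀ k, ρ k ≤ r) :
    Tendsto (fun n : ℕ => ∑ k, d k * (ρ k / r) ^ n) atTop
      (𝓝 (∑ k ∈ univ.filter (fun k => ρ k = r), d k)) := by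
  rw [Finset.sum_filter]
  refine tendsto_finsetSum _ fun k _ => ?_
  split_ifs with h
  · simp [h, hr.ne']
  · have hlt : ρ k / r < 1 := (div_lt_one hr).2 ((hle k).lt_of_ne h)
    simpa using
      (tendsto_pow_atTop_nhds_zero_of_lt_one (div_nonneg (h0 k) hr.le) hlt).const_mul (d k)

theorem tendsto_sum_mul_pow_div_sum_mul_pow {ι : Type*} [Fintype ι] (ρ c d : ι → ℝ) {r : ℝ}
    (hr : 0 < r) (h0 : ∀ k, 0 ≤ ρ k) (hle : ∀ k, ρ k ≤ r)
    (hc : ∑ k ∈ univ.filter (fun k => ρ k = r), c k ≠ 0) :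
    Tendsto (fun n : ℕ => (∑ k, d k * ρ k ^ n) / (∑ k, c k * ρ k ^ n)) atTop
      (𝓝 ((∑ k ∈ univ.filter (fun k => ρ k = r), d k) /
        ∑ k ∈ univ.filter (fun k => ρ k = r), c k)) := by
  have rescale : ∀ (e : ι → ℝ) (n : ℕ),
      ∑ k, e k * (ρ k / r) ^ n = (∑ k, e k * ρ k ^ n) / r ^ n := fun e n => by
    rw [Finset.sum_div]
    exact Finset.sum_congr rfl fun k _ => by rw [div_pow, mul_div_assoc]
  refine ((tendsto_sum_mul_div_pow ρ d hr h0 hle).div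
    (tendsto_sum_mul_div_pow ρ c hr h0 hle) hc).congr fun n => ?_
  rw [Pi.div_apply, rescale, rescale, div_div_div_cancel_right₀ (pow_ne_zero n hr.ne')]

theorem stmt_1_general (K : ℕ) (ρ c a : Fin K → ℝ) (A : ℝ)
    (hρ : ∀ k, ρ k ∈ Set.Ioo (0:ℝ) 1) (ρs : ℝ)
    (hρs : IsGreatest (Set.range ρ) ρs)
    (hc : ∑ k ∈ Finset.univ.filter (fun k => ρ k = ρs), c k ≠ 0)
    (ha : ∀ k, ρ k = ρs → a k = A) :
    Tendsto
      (fun n : ℕ =>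
        (∑ k, c k * a k * (1 - ρ k)⁻¹ * ρ k ^ n) / (∑ k, c k * ρ k ^ n))
      atTop (nhds (A * (1 - ρs)⁻¹)) := by
  obtain ⟨k₀, hk₀⟩ := hρs.1
  have hρs_pos : 0 < ρs := hk₀ ▸ (hρ k₀).1
  have hle : ∀ k, ρ k ≤ ρs := fun k => hρs.2 ⟨k, rfl⟩
  have hlim := tendsto_sum_mul_pow_div_sum_mul_pow ρ c (fun k => c k * a k * (1 - ρ k)⁻¹)
    hρs_pos (fun k => (hρ k).1.le) hle hc
  have htop : ∑ k ∈ univ.filter (fun k => ρ k = ρs), c k * a k * (1 - ρ k)⁻¹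
      = (∑ k ∈ univ.filter (fun k => ρ k = ρs), c k) * (A * (1 - ρs)⁻¹) := by
    rw [Finset.sum_mul]
    refine Finset.sum_congr rfl fun k hk => ?_
    have hk : ρ k = ρs := (Finset.mem_filter.1 hk).2
    rw [ha k hk, hk, mul_assoc]
  rwa [htop, mul_div_cancel_left₀ _ hc] at hlim

theorem stmt_1 (K : ℕ) (hK : 0 < K) (ρ c a : Fin K → ℝ) (A : ℝ)
    (hρ : ∀ k, ρ k ∈ Set.Ioo (0:ℝ) 1) (ρs : ℝ)
    (hρs : IsGreatest (Set.range ρ) ρs)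
    (hc : ∑ k ∈ Finset.univ.filter (fun k => ρ k = ρs), c k ≠ 0)
    (ha : ∀ k, ρ k = ρs → a k = A) :
    Tendsto
      (fun n : ℕ =>
        (∑ k, c k * a k * (1 - ρ k)⁻¹ * ρ k ^ n) / (∑ k, c k * ρ k ^ n))
      atTop (nhds (A * (1 - ρs)⁻¹)) :=
  stmt_1_general K ρ c a A hρ ρs hρs hc ha
end

section
/- Let ρ_1,…,ρ_K ∈ (0,1), c_1,…,c_K > 0, α_1,…,α_K ∈ ℝ, and h_{-1,0} ≥ 0. If h̄_{1,0} ≥ max_k { ρ_k h_{-1,0} + ρ_k α_k (1-ρ_k)^{-1} }, then for every n ≥ 1, (∑_k c_k ρ_k^{n-1})/(∑_k c_k ρ_k^n) · h̄_{1,0} − (∑_k c_k α_k (1-ρ_k)^{-1} ρ_k^n)/(∑_k c_k ρ_k^n) ≥ h_{-1,0}. -/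
open Finset

/-
Multiplying the threshold condition for the k-th geometric term by `c_k ρ_k^(n-1) ≥ 0` gives a
termwise inequality `c_k ρ_k^n h₁₀ + c_k α_k (1 - ρ_k)⁻¹ ρ_k^n ≤ c_k ρ_k^(n-1) h̄₁₀`; summing over
`k` and dividing by the positive sum `∑ c_k ρ_k^n` yields the claim.
-/

lemma le_sum_div_mul_sub_sum_div {ι : Type*} {s : Finset ι} (hs : s.Nonempty) {w a b : ι → ℝ}
    {x y : ℝ} (hw : ∀ k ∈ s, 0 < w k) (h : ∀ k ∈ s, w k * x + a k ≤ b k * y) :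
    x ≤ (∑ k ∈ s, b k) / (∑ k ∈ s, w k) * y - (∑ k ∈ s, a k) / (∑ k ∈ s, w k) := by
  have hW : 0 < ∑ k ∈ s, w k := sum_pos hw hs
  have hsum : (∑ k ∈ s, w k) * x + ∑ k ∈ s, a k ≤ (∑ k ∈ s, b k) * y := by
    rw [sum_mul, sum_mul, ← sum_add_distrib]
    exact sum_le_sum h
  rw [div_mul_eq_mul_div, div_sub_div_same, le_div_iff₀ hW]
  linarith

lemma geometric_term_le_of_threshold_le {ρ c α x y : ℝ} (hρ : 0 ≤ ρ) (hc : 0 ≤ c)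
    (hy : ρ * x + ρ * α * (1 - ρ)⁻¹ ≤ y) (m : ℕ) :
    c * ρ ^ (m + 1) * x + c * α * (1 - ρ)⁻¹ * ρ ^ (m + 1) ≤ c * ρ ^ m * y :=
  calc c * ρ ^ (m + 1) * x + c * α * (1 - ρ)⁻¹ * ρ ^ (m + 1)
      = c * ρ ^ m * (ρ * x + ρ * α * (1 - ρ)⁻¹) := by ring
    _ ≤ c * ρ ^ m * y := mul_le_mul_of_nonneg_left hy (by positivity)

theorem stmt_3_general (K : ℕ) (hK : 0 < K) (ρ c α : Fin K → ℝ)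
    (hρ : ∀ k, ρ k ∈ Set.Ioo (0:ℝ) 1) (hc : ∀ k, 0 < c k)
    (h10 hb10 : ℝ)
    (hbig : ∀ k, ρ k * h10 + ρ k * α k * (1 - ρ k)⁻¹ ≤ hb10) :
    ∀ n : ℕ, 1 ≤ n →
      h10 ≤ (∑ k, c k * ρ k ^ (n - 1)) / (∑ k, c k * ρ k ^ n) * hb10 -
        (∑ k, c k * α k * (1 - ρ k)⁻¹ * ρ k ^ n) / (∑ k, c k * ρ k ^ n) := by
  intro n hn
  obtain ⟨m, rfl⟩ := Nat.exists_eq_add_of_le' hn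
  rw [Nat.add_sub_cancel]
  have : Nonempty (Fin K) := ⟨⟨0, hK⟩⟩
  exact le_sum_div_mul_sub_sum_div univ_nonempty
    (fun k _ ↦ mul_pos (hc k) (pow_pos (hρ k).1 _))
    (fun k _ ↦ geometric_term_le_of_threshold_le (hρ k).1.le (hc k).le (hbig k) m)

theorem stmt_3 (K : ℕ) (hK : 0 < K) (ρ c α : Fin K → ℝ)
    (hρ : ∀ k, ρ k ∈ Set.Ioo (0:ℝ) 1) (hc : ∀ k, 0 < c k)
    (h10 hb10 : ℝ) (hh10 : 0 ≤ h10)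
    (hbig : ∀ k, ρ k * h10 + ρ k * α k * (1 - ρ k)⁻¹ ≤ hb10) :
    ∀ n : ℕ, 1 ≤ n →
      h10 ≤ (∑ k, c k * ρ k ^ (n - 1)) / (∑ k, c k * ρ k ^ n) * hb10 -
        (∑ k, c k * α k * (1 - ρ k)⁻¹ * ρ k ^ n) / (∑ k, c k * ρ k ^ n) :=
  stmt_3_general K hK ρ c α hρ hc h10 hb10 hbig
end

section
/- Combining the two preceding identities: if α_k = ∑_i q_{i,1} − ∑_i ρ_k^{-i} σ_k q_{i,-1}, and the boundary rates are h̄_{i,1}(n_1,0) = q_{i,1}, h̄_{1,0}(n_1,0) = h̄_{1,0} constant, and h̄_{-1,0}(n_1,0) given by the single direction inhomogeneous construction, then π̄(n_1,n_2) = ∑_k c_k ρ_k^{n_1} σ_k^{n_2} satisfies the horizontal boundary balance equation ∑_{i=-1}^1 π̄(n_1−i,1) q_{i,-1} + π̄(n_1−1,0) h̄_{1,0} + π̄(n_1+1,0) h̄_{-1,0}(n_1+1,0) = π̄(n_1,0)(∑_{i=-1}^1 q_{i,1} + h̄_{-1,0}(n_1,0) + h̄_{1,0}) for all n_1 ≥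 1. -/
/-!
Each geometric term `ρ^{n₁} σ^{n₂}` lies on the interior curve, so by the definition of `α` it
misses the horizontal boundary balance equation only by `α ρ^{n₁}`. The inhomogeneous rate
`h̄_{-1,0}` is built so that `π̄(n₁, 0) h̄_{-1,0}(n₁, 0)` is explicit; its telescoping part
`α (1 - ρ)⁻¹ (ρ^{n₁} - ρ^{n₁+1}) = α ρ^{n₁}` exactly compensates that defect, term by term.
-/

open Finset

theorem geom_horizontal_balance {F : Type*} [Field F] {ρ σ α : F} (q : ℤ → ℤ → F)
    (hρ₀ : ρ ≠ 0) (hρ₁ : ρ ≠ 1)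
    (hα : α = (∑ i ∈ Icc (-1:ℤ) 1, q i 1) - ∑ i ∈ Icc (-1:ℤ) 1, ρ ^ (-i) * σ * q i (-1))
    (n : ℤ) :
    ∑ i ∈ Icc (-1:ℤ) 1, ρ ^ (n - i) * σ * q i (-1) - α * (1 - ρ)⁻¹ * ρ ^ (n + 1) =
      ρ ^ n * ∑ i ∈ Icc (-1:ℤ) 1, q i 1 - α * (1 - ρ)⁻¹ * ρ ^ n := by
  have hinterior : ∑ i ∈ Icc (-1:ℤ) 1, ρ ^ (n - i) * σ * q i (-1) =
      ρ ^ n * ((∑ i ∈ Icc (-1:ℤ) 1, q i 1) - α) := by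
    rw [hα, sub_sub_cancel, mul_sum]
    refine sum_congr rfl fun i _ => ?_
    rw [zpow_sub₀ hρ₀, div_eq_mul_inv, ← zpow_neg]
    ring
  have htelescope : α * (1 - ρ)⁻¹ * ρ ^ n - α * (1 - ρ)⁻¹ * ρ ^ (n + 1) = α * ρ ^ n := by
    have : (1 : F) - ρ ≠ 0 := sub_ne_zero.mpr hρ₁.symm
    rw [zpow_add_one₀ hρ₀]
    field_simp
  linear_combination hinterior + htelescope

theorem stmt_10_general (K : ℕ) (ρ σ c α : Fin K → ℝ)
    (hρ : ∀ k, ρ k ∈ Set.Ioo (0:ℝ) 1)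
    (q : ℤ → ℤ → ℝ)
    (hα : ∀ k, α k = (∑ i ∈ Finset.Icc (-1:ℤ) 1, q i 1) -
      ∑ i ∈ Finset.Icc (-1:ℤ) 1, ρ k ^ (-i) * σ k * q i (-1))
    (πb : ℤ → ℤ → ℝ)
    (hπ : ∀ n₁ n₂ : ℤ, πb n₁ n₂ = ∑ k, c k * ρ k ^ n₁ * σ k ^ n₂)
    (hne : ∀ n₁ : ℤ, 1 ≤ n₁ → πb n₁ 0 ≠ 0)
    (hb10 : ℝ)
    (hbar : ℤ → ℝ)
    (hhbar : ∀ n₁ : ℤ, 1 ≤ n₁ →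
      hbar n₁ = ((∑ k, c k * ρ k ^ (n₁ - 1)) * hb10 -
        ∑ k, c k * α k * (1 - ρ k)⁻¹ * ρ k ^ n₁) / (∑ k, c k * ρ k ^ n₁)) :
    ∀ n₁ : ℤ, 1 ≤ n₁ →
      (∑ i ∈ Finset.Icc (-1:ℤ) 1, πb (n₁ - i) 1 * q i (-1)) +
        πb (n₁ - 1) 0 * hb10 + πb (n₁ + 1) 0 * hbar (n₁ + 1) =
        πb n₁ 0 * ((∑ i ∈ Finset.Icc (-1:ℤ) 1, q i 1) + hbar n₁ + hb10) := by
  intro n hn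
  have hπ₀ : ∀ m, πb m 0 = ∑ k, c k * ρ k ^ m := by simp [hπ]
  have hflow : ∀ m, 1 ≤ m → πb m 0 * hbar m =
      πb (m - 1) 0 * hb10 - ∑ k, c k * α k * (1 - ρ k)⁻¹ * ρ k ^ m := by
    intro m hm
    rw [hhbar m hm, ← hπ₀, ← hπ₀, mul_div_cancel₀ _ (hne m hm)]
  have hbalance : ∑ i ∈ Icc (-1:ℤ) 1, πb (n - i) 1 * q i (-1) -
        ∑ k, c k * α k * (1 - ρ k)⁻¹ * ρ k ^ (n + 1) =
      πb n 0 * ∑ i ∈ Icc (-1:ℤ) 1, q i 1 - ∑ k, c k * α k * (1 - ρ k)⁻¹ * ρ k ^ n := by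
    simp only [hπ, zpow_one, zpow_zero, mul_one, sum_mul]
    rw [sum_comm, ← sum_sub_distrib, ← sum_sub_distrib]
    refine sum_congr rfl fun k _ => ?_
    have hk := geom_horizontal_balance q (hρ k).1.ne' (hρ k).2.ne (hα k) n
    have hpull : ∑ i ∈ Icc (-1:ℤ) 1, c k * ρ k ^ (n - i) * σ k * q i (-1) =
        c k * ∑ i ∈ Icc (-1:ℤ) 1, ρ k ^ (n - i) * σ k * q i (-1) := by
      simp only [mul_sum, mul_assoc]
    linear_combination c k * hk + hpull
  have hnext := hflow (n + 1) (by omega)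
  rw [add_sub_cancel_right] at hnext
  linear_combination hbalance + hnext - hflow n hn

theorem stmt_10 (K : ℕ) (ρ σ c α : Fin K → ℝ)
    (hρ : ∀ k, ρ k ∈ Set.Ioo (0:ℝ) 1) (hσ : ∀ k, σ k ∈ Set.Ioo (0:ℝ) 1)
    (q : ℤ → ℤ → ℝ) (hq : ∀ i j, 0 ≤ q i j)
    (hα : ∀ k, α k = (∑ i ∈ Finset.Icc (-1:ℤ) 1, q i 1) -
      ∑ i ∈ Finset.Icc (-1:ℤ) 1, ρ k ^ (-i) * σ k * q i (-1))
    (πb : ℤ → ℤ → ℝ)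
    (hπ : ∀ n₁ n₂ : ℤ, πb n₁ n₂ = ∑ k, c k * ρ k ^ n₁ * σ k ^ n₂)
    (hne : ∀ n₁ : ℤ, 1 ≤ n₁ → πb n₁ 0 ≠ 0)
    (hb10 : ℝ) (hhb10 : 0 ≤ hb10)
    (hbar : ℤ → ℝ)
    (hhbar : ∀ n₁ : ℤ, 1 ≤ n₁ →
      hbar n₁ = ((∑ k, c k * ρ k ^ (n₁ - 1)) * hb10 -
        ∑ k, c k * α k * (1 - ρ k)⁻¹ * ρ k ^ n₁) / (∑ k, c k * ρ k ^ n₁)) :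
    ∀ n₁ : ℤ, 1 ≤ n₁ →
      (∑ i ∈ Finset.Icc (-1:ℤ) 1, πb (n₁ - i) 1 * q i (-1)) +
        πb (n₁ - 1) 0 * hb10 + πb (n₁ + 1) 0 * hbar (n₁ + 1) =
        πb n₁ 0 * ((∑ i ∈ Finset.Icc (-1:ℤ) 1, q i 1) + hbar n₁ + hb10) :=
  stmt_10_general K ρ σ c α hρ q hα πb hπ hne hb10 hbar hhbar
end

section
/- Let ρ_k ∈ (0,1), c_k, α_k ∈ ℝ, h̄_{1,0} ≥ 0, B(n) = ∑_{m=0}^M b_m n^m with b_m ≥ 0, and π̄(n) = ∑_k c_k ρ_k^n ≠ 0 for all n ≥ 0, with inhomogeneous rates h̄_{-1,0}(n) from the single direction construction. Then ∑_{n=1}^∞ π̄(n) h̄_{-1,0}(n) B(n) = h̄_{1,0} ∑_{k=1}^K ∑_{m=0}^M c_k ρ_k^{-1} b_m Li_{-m}(ρ_k) − ∑_{k=1}^K ∑_{m=0}^M c_k α_k b_m (1−ρ_k)^{-1} Li_{-m}(ρ_k), provided all series converge absolutely. -/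
/-!
Since `π̄(n) ≠ 0`, the construction gives `π̄(n + 1) h̄_{-1,0}(n + 1) = π̄(n) h̄_{1,0} − ∑ₖ cₖ αₖ (1 − ρₖ)⁻¹ ρₖ^(n+1)`,
and writing `π̄(n) = ∑ₖ cₖ ρₖ⁻¹ ρₖ^(n+1)` this is a finite combination `∑ₖ dₖ ρₖ^(n+1)` of geometric sequences.
Multiplied by the polynomial `B(n + 1)` it becomes a finite combination of the summable series
`∑ₙ (n + 1)^m ρₖ^(n+1) = Li_{-m}(ρₖ)`, which can be summed term by term.
-/

open Finset

section PolylogSeries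

variable {R : Type*} [NormedCommRing R] [HasSummableGeomSeries R]

theorem summable_succ_pow_mul_geometric (m : ℕ) {r : R} (hr : ‖r‖ < 1) :
    Summable (fun n : ℕ ↦ ((n + 1 : ℕ) : R) ^ m * r ^ (n + 1)) :=
  (summable_nat_add_iff (f := fun n : ℕ ↦ (n : R) ^ m * r ^ n) 1).2
    (summable_pow_mul_geometric_of_norm_lt_one m hr)

theorem tsum_geometric_combination_mul_poly {ι : Type*} [Fintype ι] (s : Finset ℕ)
    (d r : ι → R) (hr : ∀ k, ‖r k‖ < 1) (b : ℕ → R) :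
    ∑' n : ℕ, (∑ k, d k * r k ^ (n + 1)) * ∑ m ∈ s, b m * ((n + 1 : ℕ) : R) ^ m =
      ∑ k, ∑ m ∈ s, d k * b m * ∑' n : ℕ, ((n + 1 : ℕ) : R) ^ m * r k ^ (n + 1) := by
  have hterm : ∀ k m, Summable (fun n : ℕ ↦ d k * b m * (((n + 1 : ℕ) : R) ^ m * r k ^ (n + 1))) :=
    fun k m ↦ (summable_succ_pow_mul_geometric m (hr k)).mul_left _
  calc ∑' n : ℕ, (∑ k, d k * r k ^ (n + 1)) * ∑ m ∈ s, b m * ((n + 1 : ℕ) : R) ^ m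
      = ∑' n : ℕ, ∑ k, ∑ m ∈ s, d k * b m * (((n + 1 : ℕ) : R) ^ m * r k ^ (n + 1)) := by
        refine tsum_congr fun n ↦ ?_
        rw [sum_mul_sum]
        exact sum_congr rfl fun _ _ ↦ sum_congr rfl fun _ _ ↦ by ring
    _ = ∑ k, ∑ m ∈ s, ∑' n : ℕ, d k * b m * (((n + 1 : ℕ) : R) ^ m * r k ^ (n + 1)) := by
        rw [Summable.tsum_finsetSum fun k _ ↦ summable_sum fun m _ ↦ hterm k m]
        exact sum_congr rfl fun k _ ↦ Summable.tsum_finsetSum fun m _ ↦ hterm k m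
    _ = _ := sum_congr rfl fun k _ ↦ sum_congr rfl fun m _ ↦
        (summable_succ_pow_mul_geometric m (hr k)).tsum_mul_left _

end PolylogSeries

theorem single_direction_flow_eq_geometric_combination {ι : Type*} [Fintype ι] (ρ c α : ι → ℝ)
    (hρ : ∀ k, ρ k ≠ 0) (hb10 : ℝ) (πb : ℕ → ℝ) (hπ : ∀ n, πb n = ∑ k, c k * ρ k ^ n)
    (hπne : ∀ n, πb n ≠ 0) (hbar : ℕ → ℝ)
    (hhbar : ∀ n, 1 ≤ n →
      hbar n = (πb n)⁻¹ *
        (πb (n - 1) * hb10 - ∑ k, c k * α k * (1 - ρ k)⁻¹ * ρ k ^ n)) (n : ℕ) :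
    πb (n + 1) * hbar (n + 1) =
      ∑ k, (hb10 * (c k * (ρ k)⁻¹) - c k * α k * (1 - ρ k)⁻¹) * ρ k ^ (n + 1) := by
  rw [hhbar (n + 1) n.succ_pos, mul_inv_cancel_left₀ (hπne (n + 1)), Nat.add_sub_cancel, hπ,
    sum_mul, ← sum_sub_distrib]
  refine sum_congr rfl fun k _ ↦ ?_
  rw [pow_succ]
  field_simp [hρ k]

theorem stmt_14_general (K M : ℕ) (ρ c α : Fin K → ℝ) (b : ℕ → ℝ)
    (hρ : ∀ k, ρ k ∈ Set.Ioo (0:ℝ) 1)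
    (hb10 : ℝ)
    (πb : ℕ → ℝ) (hπ : ∀ n, πb n = ∑ k, c k * ρ k ^ n)
    (hπne : ∀ n, πb n ≠ 0)
    (B : ℕ → ℝ) (hB : ∀ n, B n = ∑ m ∈ Finset.range (M + 1), b m * (n : ℝ) ^ m)
    (hbar : ℕ → ℝ)
    (hhbar : ∀ n, 1 ≤ n →
      hbar n = (πb n)⁻¹ *
        (πb (n - 1) * hb10 - ∑ k, c k * α k * (1 - ρ k)⁻¹ * ρ k ^ n)) :
    ∑' n : ℕ, πb (n + 1) * hbar (n + 1) * B (n + 1) =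
      hb10 * ∑ k, ∑ m ∈ Finset.range (M + 1),
          c k * (ρ k)⁻¹ * b m * ∑' n : ℕ, ((n + 1 : ℕ) : ℝ) ^ m * ρ k ^ (n + 1) -
        ∑ k, ∑ m ∈ Finset.range (M + 1),
          c k * α k * b m * (1 - ρ k)⁻¹ *
            ∑' n : ℕ, ((n + 1 : ℕ) : ℝ) ^ m * ρ k ^ (n + 1) := by
  have hρ_norm : ∀ k, ‖ρ k‖ < 1 := fun k ↦ by
    rw [Real.norm_of_nonneg (hρ k).1.le]; exact (hρ k).2
  simp_rw [single_direction_flow_eq_geometric_combination ρ c α (fun k ↦ (hρ k).1.ne') hb10 πb hπ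
    hπne hbar hhbar, hB, tsum_geometric_combination_mul_poly _ _ _ hρ_norm, mul_sum,
    ← sum_sub_distrib]
  exact sum_congr rfl fun _ _ ↦ sum_congr rfl fun _ _ ↦ by ring

theorem stmt_14 (K M : ℕ) (ρ c α : Fin K → ℝ) (b : ℕ → ℝ)
    (hρ : ∀ k, ρ k ∈ Set.Ioo (0:ℝ) 1)
    (hb : ∀ m ∈ Finset.range (M + 1), 0 ≤ b m)
    (hb10 : ℝ) (hhb10 : 0 ≤ hb10)
    (πb : ℕ → ℝ) (hπ : ∀ n, πb n = ∑ k, c k * ρ k ^ n)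
    (hπne : ∀ n, πb n ≠ 0)
    (B : ℕ → ℝ) (hB : ∀ n, B n = ∑ m ∈ Finset.range (M + 1), b m * (n : ℝ) ^ m)
    (hbar : ℕ → ℝ)
    (hhbar : ∀ n, 1 ≤ n →
      hbar n = (πb n)⁻¹ *
        (πb (n - 1) * hb10 - ∑ k, c k * α k * (1 - ρ k)⁻¹ * ρ k ^ n))
    (hsum : Summable (fun n : ℕ => |πb (n + 1) * hbar (n + 1) * B (n + 1)|)) :
    ∑' n : ℕ, πb (n + 1) * hbar (n + 1) * B (n + 1) =
      hb10 * ∑ k, ∑ m ∈ Finset.range (M + 1),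
          c k * (ρ k)⁻¹ * b m * ∑' n : ℕ, ((n + 1 : ℕ) : ℝ) ^ m * ρ k ^ (n + 1) -
        ∑ k, ∑ m ∈ Finset.range (M + 1),
          c k * α k * b m * (1 - ρ k)⁻¹ *
            ∑' n : ℕ, ((n + 1 : ℕ) : ℝ) ^ m * ρ k ^ (n + 1) :=
  stmt_14_general K M ρ c α b hρ hb10 πb hπ hπne B hB hbar hhbar
end
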